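/- Let S_{n,d} be polynomials over F_q of degree ≤ n in s-variables and ≤ d in t-variables, W as below, and φ_{W,n,d}: S_{n,d} → H^0(W, O_W) the restriction map. Then #im(φ_{W,n,d}) ≥ q^{min(d+1, r)} where r = deg π_2(W). -/

import Mathlib

/-- `Bspan F R s t n d` : the `F`-span of the images of monomials of degree at most `n`
in the `s`-variables and at most `d` in the `t`-variables, i.e. the image of the
restriction map `φ_{W,n,d} : S_{n,d} → H^0(W, O_W)` where `R = H^0(W, O_W)`. -/
noncomputable def Bspan (F R : Type*) [Field F] [CommRing R] [Algebra F R]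
    {N M : ℕ} (s : Fin N → R) (t : Fin M → R) (n d : ℕ) : Submodule F R :=
  Submodule.span F {x | ∃ (a : Fin N → ℕ) (b : Fin M → ℕ),
    (∑ i, a i) ≤ n ∧ (∑ j, b j) ≤ d ∧ x = (∏ i, s i ^ a i) * (∏ j, t j ^ b j)}

/-- Span of monomials in the `t` variables of degree at most `d`. -/
noncomputable def Tspan (F R : Type*) [Field F] [CommRing R] [Algebra F R]
    {M : ℕ} (t : Fin M → R) (d : ℕ) : Submodule F R :=
  Submodule.span F {x | ∃ b : Fin M → ℕ, (∑ j, b j) ≤ d ∧ x = ∏ j, t j ^ b j}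

section aux

variable {F R : Type*} [Field F] [CommRing R] [Algebra F R] {M : ℕ} (t : Fin M → R)

lemma sum_update_aux (b : Fin M → ℕ) (j' : Fin M) (v : ℕ) :
    ∑ j, Function.update b j' v j = (∑ j ∈ Finset.univ \ {j'}, b j) + v := by
  rw [Finset.sum_eq_sum_sdiff_singleton_add (Finset.mem_univ j'), Function.update_self]
  congr 1
  exact Finset.sum_congr rfl fun j hj =>
    Function.update_of_ne (by simpa using (Finset.mem_sdiff.mp hj).2) _ _

lemma sum_split_aux (b : Fin M → ℕ) (j' : Fin M) :
    ∑ j, b j = (∑ j ∈ Finset.univ \ {j'}, b j) + b j' :=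
  Finset.sum_eq_sum_sdiff_singleton_add (Finset.mem_univ j') b

lemma prod_update_aux (b : Fin M → ℕ) (j' : Fin M) (v : ℕ) :
    ∏ j, t j ^ Function.update b j' v j = (∏ j ∈ Finset.univ \ {j'}, t j ^ b j) * t j' ^ v := by
  rw [Finset.prod_eq_prod_diff_singleton_mul (Finset.mem_univ j')]
  congr 1
  · exact Finset.prod_congr rfl fun j hj => by
      rw [Function.update_of_ne (by simpa using (Finset.mem_sdiff.mp hj).2)]
  · simp

lemma prod_split_aux (b : Fin M → ℕ) (j' : Fin M) :
    ∏ j, t j ^ b j = (∏ j ∈ Finset.univ \ {j'}, t j ^ b j) * t j' ^ b j' :=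
  Finset.prod_eq_prod_diff_singleton_mul (Finset.mem_univ j') _

lemma Tspan_mono : Monotone (Tspan F R t) := by
  intro d d' hdd'
  apply Submodule.span_mono
  rintro x ⟨b, hb, rfl⟩
  exact ⟨b, hb.trans hdd', rfl⟩

lemma Tspan_le_Bspan {N : ℕ} (s : Fin N → R) (n d : ℕ) :
    Tspan F R t d ≤ Bspan F R s t n d := by
  apply Submodule.span_mono
  rintro x ⟨b, hb, rfl⟩
  simp only [Set.mem_setOf_eq]
  exact ⟨0, b, by simp, hb, by simp⟩

lemma Tspan_le_adjoin (d : ℕ) :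
    Tspan F R t d ≤ Subalgebra.toSubmodule (Algebra.adjoin F (Set.range t)) := by
  rw [Tspan, Submodule.span_le]
  rintro x ⟨b, hb, rfl⟩
  show ∏ j, t j ^ b j ∈ Algebra.adjoin F (Set.range t)
  exact Subalgebra.prod_mem _ fun j _ =>
    Subalgebra.pow_mem _ (Algebra.subset_adjoin (Set.mem_range_self j)) _

lemma mul_Tspan_le (j' : Fin M) (d : ℕ) :
    Submodule.map (LinearMap.mulLeft F (t j')) (Tspan F R t d) ≤ Tspan F R t (d + 1) := by
  rw [Tspan, Submodule.map_span, Submodule.span_le]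
  rintro x ⟨y, ⟨b, hb, rfl⟩, rfl⟩
  apply Submodule.subset_span
  refine ⟨Function.update b j' (b j' + 1), ?_, ?_⟩
  · rw [sum_update_aux]
    rw [sum_split_aux b j'] at hb
    omega
  · simp only [LinearMap.mulLeft_apply]
    rw [prod_update_aux, prod_split_aux t b j', pow_succ]
    ring

lemma Tspan_stable_step (d : ℕ) (h : Tspan F R t d = Tspan F R t (d + 1)) :
    Tspan F R t (d + 1) = Tspan F R t (d + 2) := by
  refine le_antisymm (Tspan_mono t (by omega)) ?_
  rw [Tspan, Submodule.span_le]
  rintro x ⟨b, hb, rfl⟩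
  by_cases hb' : (∑ j, b j) ≤ d + 1
  · exact Submodule.subset_span ⟨b, hb', rfl⟩
  · have hpos : 0 < ∑ j, b j := by omega
    obtain ⟨j', -, hj'⟩ := Finset.exists_lt_of_sum_lt (f := fun _ : Fin M => 0) (g := b)
      (by simpa using hpos)
    have hmem : (∏ j, t j ^ Function.update b j' (b j' - 1) j) ∈ Tspan F R t (d + 1) := by
      apply Submodule.subset_span
      refine ⟨Function.update b j' (b j' - 1), ?_, rfl⟩
      rw [sum_update_aux]
      rw [sum_split_aux b j'] at hb
      omega
    rw [← h] at hmem
    have hmm := mul_Tspan_le t j' d ⟨_, hmem, rfl⟩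
    have heq : t j' * (∏ j, t j ^ Function.update b j' (b j' - 1) j) = ∏ j, t j ^ b j := by
      rw [prod_update_aux, prod_split_aux t b j']
      rw [← mul_assoc, mul_comm (t j'), mul_assoc, ← pow_succ']
      congr 2
      omega
    simpa only [LinearMap.mulLeft_apply, heq, SetLike.mem_coe] using hmm

lemma Tspan_stable (d : ℕ) (h : Tspan F R t d = Tspan F R t (d + 1)) :
    ∀ m, Tspan F R t (d + m) = Tspan F R t d := by
  have key : ∀ m, Tspan F R t (d + m) = Tspan F R t (d + m + 1) := by
    intro m
    induction m with
    | zero => exact h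
    | succ m ih => exact Tspan_stable_step t (d + m) ih
  intro m
  induction m with
  | zero => rfl
  | succ m ih => exact (key m).symm.trans ih

lemma adjoin_le_Tspan (d : ℕ) (h : Tspan F R t d = Tspan F R t (d + 1)) :
    Subalgebra.toSubmodule (Algebra.adjoin F (Set.range t)) ≤ Tspan F R t d := by
  rw [Algebra.adjoin_eq_span, Submodule.span_le]
  intro x hx
  have hmono : ∃ b : Fin M → ℕ, x = ∏ j, t j ^ b j := by
    induction hx using Submonoid.closure_induction with
    | mem y hy =>
      obtain ⟨i, rfl⟩ := hy
      refine ⟨fun j => if j = i then 1 else 0, ?_⟩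
      rw [Finset.prod_eq_single i (fun j _ hji => by simp [hji]) (by simp)]
      simp
    | one => exact ⟨0, by simp⟩
    | mul y z _ _ hy hz =>
      obtain ⟨b1, rfl⟩ := hy
      obtain ⟨b2, rfl⟩ := hz
      exact ⟨b1 + b2, by simp [pow_add, Finset.prod_mul_distrib]⟩
  obtain ⟨b, rfl⟩ := hmono
  have h1 : (∏ j, t j ^ b j) ∈ Tspan F R t (d + ∑ j, b j) :=
    Tspan_mono t (show (∑ j, b j) ≤ d + ∑ j, b j by omega)
      (Submodule.subset_span ⟨b, le_refl _, rfl⟩)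
  rwa [Tspan_stable t d h] at h1

lemma Tspan_finrank_ge [FiniteDimensional F R] (r : ℕ)
    (hr : Module.finrank F
      (Subalgebra.toSubmodule (Algebra.adjoin F (Set.range t))) = r) (d : ℕ) :
    min (d + 1) r ≤ Module.finrank F (Tspan F R t d) := by
  induction d with
  | zero =>
    rcases Nat.eq_zero_or_pos r with hr0 | hr0
    · simp [hr0]
    · have h1 : (1 : R) ∈ Tspan F R t 0 := Submodule.subset_span ⟨0, by simp, by simp⟩
      have hne : (1 : R) ≠ 0 := by
        intro h10
        have hsub : Subsingleton R := subsingleton_iff_zero_eq_one.mp h10.symm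
        have : Module.finrank F
            (Subalgebra.toSubmodule (Algebra.adjoin F (Set.range t))) = 0 := by
          have : Subsingleton (Subalgebra.toSubmodule (Algebra.adjoin F (Set.range t))) :=
            ⟨fun a b => Subtype.ext (Subsingleton.elim _ _)⟩
          exact Module.finrank_zero_of_subsingleton
        omega
      have hbot : Tspan F R t 0 ≠ ⊥ := by
        intro hbot
        rw [hbot] at h1
        exact hne (by simpa using h1)
      have := Submodule.one_le_finrank_iff.mpr hbot
      omega
  | succ d ih =>
    have hle' : Tspan F R t d ≤ Tspan F R t (d + 1) := Tspan_mono t (by omega)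
    rcases eq_or_lt_of_le hle' with heq | hlt
    · have hle := adjoin_le_Tspan (F := F) t d heq
      have hge := Tspan_le_adjoin (F := F) t d
      have h2 : Tspan F R t d = Subalgebra.toSubmodule (Algebra.adjoin F (Set.range t)) :=
        le_antisymm hge hle
      have h3 : Module.finrank F (Tspan F R t (d + 1)) = r := by
        rw [← heq, h2, hr]
      omega
    · have := Submodule.finrank_lt_finrank_of_lt hlt
      omega

end aux

theorem stmt18 (F R : Type*) [Field F] [Fintype F] [CommRing R] [Algebra F R]
    [FiniteDimensional F R] {N M : ℕ} (s : Fin N → R) (t : Fin M → R)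
    (q r n d : ℕ) (hq : Fintype.card F = q)
    (hr : Module.finrank F
      (Subalgebra.toSubmodule (Algebra.adjoin F (Set.range t))) = r) :
    q ^ min (d + 1) r ≤ Nat.card ↥(Bspan F R s t n d) := by
  have hfin : Finite R := Module.finite_of_finite F
  have : Fintype ↥(Bspan F R s t n d) := Fintype.ofFinite _
  have hcard : Nat.card ↥(Bspan F R s t n d)
      = q ^ Module.finrank F (Bspan F R s t n d) := by
    rw [Nat.card_eq_fintype_card, Module.card_eq_pow_finrank (K := F) (V := ↥(Bspan F R s t n d)), hq]
  rw [hcard]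
  apply Nat.pow_le_pow_right (by rw [← hq]; exact Fintype.card_pos)
  calc min (d + 1) r ≤ Module.finrank F (Tspan F R t d) :=
        Tspan_finrank_ge t r hr d
    _ ≤ Module.finrank F (Bspan F R s t n d) :=
        Submodule.finrank_mono (Tspan_le_Bspan t s n d)
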